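/- arXiv:1407.1543 — 2 statements merged into one kernel-verified Lean document; each statement's English description precedes it below -/
import Mathlib

section
/- Let μ be a (d,τ)-nice probability measure on ℝ^m and let A be a σ-dictionary with columns a¹, …, a^m ∈ ℝⁿ. Then there exist sum-of-squares polynomials S₁, S₂ ∈ ℝ[u₁,…,u_n] such that for every u ∈ ℝⁿ: E_{x∼μ}⟨Ax, u⟩^d = Σ_{i=1}^m ⟨aⁱ,u⟩^d + S₁(u), and Σ_{i=1}^m ⟨aⁱ,u⟩^d + τ·σ^d·d^d·‖u‖₂^d = E_{x∼μ}⟨Ax, u⟩^d + S₂(u). In particular ‖Aᵀu‖_d^d ≤ E_{x∼μ}⟨Ax, u⟩^d ≤ ‖Aᵀu‖_d^d + τ σ^d d^d ‖u‖₂^d for all u ∈ ℝⁿ. -/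
open MvPolynomial MeasureTheory

def IsSOS {σ : Type*} (p : MvPolynomial σ ℝ) : Prop :=
  ∃ (r : ℕ) (q : Fin r → MvPolynomial σ ℝ), p = ∑ i, q i ^ 2

/-!
Write `vᵢ = ⟨aⁱ, u⟩`, so that `⟨Ax, u⟩ = ∑ᵢ xᵢ vᵢ`. By the multinomial theorem
`E ⟨Ax, u⟩^d = ∑_α multinomial(α) E[x^α] v^α`: the non-square moments vanish, the diagonal ones
give `∑ᵢ vᵢ^d`, and what is left is `∑_β c_β (v^β)²` over `β ≠ (d/2) eᵢ`, with
`0 ≤ c_β = multinomial(2β) E[x^{2β}] ≤ d^d τ ≤ τ d^d multinomial(β)`. So the excess is a sum of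
squares, and it is dominated coefficientwise by `τ d^d (∑ᵢ vᵢ²)^{d/2}`. Finally
`(σ‖u‖²)^k - (∑ᵢ vᵢ²)^k = (σ‖u‖² - ∑ᵢ vᵢ²) ∑ (σ‖u‖²)^i (∑ᵢ vᵢ²)^{k-1-i}` is a sum of squares,
because the nonnegative quadratic form `σ‖u‖² - ‖Aᵀu‖²` is one (its Gram matrix is positive
semidefinite).
-/

open Finset Matrix

theorem isSOS_iff_isSumSq {κ : Type*} {p : MvPolynomial κ ℝ} : IsSOS p ↔ IsSumSq p := by
  constructor
  · rintro ⟨r, q, rfl⟩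
    exact IsSumSq.sum_sq _ _
  · intro h
    induction h with
    | zero => exact ⟨0, Fin.elim0, by simp⟩
    | sq_add a _ ih =>
      obtain ⟨r, q, rfl⟩ := ih
      exact ⟨r + 1, Fin.cons a q, by simp [Fin.sum_univ_succ, sq]⟩

theorem IsSumSq.map {R S F : Type*} [Semiring R] [Semiring S] [FunLike F R S]
    [RingHomClass F R S] (f : F) {s : R} (hs : IsSumSq s) : IsSumSq (f s) := by
  induction hs with
  | zero => simp [IsSumSq.zero]
  | sq_add a _ ih => simpa using (IsSumSq.mul_self (f a)).add ih

theorem IsSumSq.pow {R : Type*} [CommSemiring R] {s : R} (hs : IsSumSq s) (k : ℕ) :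
    IsSumSq (s ^ k) :=
  Subsemiring.mem_sumSq.1 (pow_mem (Subsemiring.mem_sumSq.2 hs) k)

theorem MvPolynomial.isSumSq_C {κ : Type*} {c : ℝ} (hc : 0 ≤ c) :
    IsSumSq (C c : MvPolynomial κ ℝ) :=
  IsSquare.isSumSq ⟨C √c, by rw [← C_mul, Real.mul_self_sqrt hc]⟩

theorem Matrix.dotProduct_transpose_mul_mulVec {ι κ : Type*} [Fintype ι] [Fintype κ]
    (A : Matrix ι κ ℝ) (x : κ → ℝ) : x ⬝ᵥ (Aᵀ * A) *ᵥ x = ∑ i, (A *ᵥ x) i ^ 2 := by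
  rw [← mulVec_mulVec, dotProduct_mulVec, vecMul_transpose]
  simp [dotProduct, sq]

theorem Matrix.PosSemidef.exists_dotProduct_mulVec_eq_sum_sq {κ : Type*} [Fintype κ]
    {Q : Matrix κ κ ℝ} (hQ : Q.PosSemidef) :
    ∃ R : Matrix κ κ ℝ, ∀ x, x ⬝ᵥ Q *ᵥ x = ∑ k, (R *ᵥ x) k ^ 2 := by
  classical
  open scoped MatrixOrder in
  obtain ⟨R, rfl⟩ := CStarAlgebra.nonneg_iff_eq_star_mul_self.mp hQ.nonneg
  exact ⟨R, dotProduct_transpose_mul_mulVec R⟩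

theorem isSumSq_C_mul_sum_sq_sub_sum_sq {ι κ : Type*} [Fintype ι] [Fintype κ]
    (a : ι → κ → ℝ) (σ : ℝ)
    (ha : ∀ u : κ → ℝ, ∑ i, (∑ j, a i j * u j) ^ 2 ≤ σ * ∑ j, u j ^ 2) :
    IsSumSq (C σ * ∑ j, X j ^ 2 - ∑ i, (∑ j, C (a i j) * X j) ^ 2 : MvPolynomial κ ℝ) := by
  classical
  set A : Matrix ι κ ℝ := Matrix.of a
  have hquad : ∀ x, x ⬝ᵥ (σ • 1 - Aᵀ * A) *ᵥ x = σ * ∑ j, x j ^ 2 - ∑ i, (A *ᵥ x) i ^ 2 := by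
    intro x
    rw [sub_mulVec, dotProduct_sub, dotProduct_transpose_mul_mulVec, smul_mulVec, one_mulVec,
      dotProduct_smul, smul_eq_mul]
    simp [dotProduct, sq]
  have hpsd : (σ • 1 - Aᵀ * A).PosSemidef := by
    refine .of_dotProduct_mulVec_nonneg ?_ fun x => ?_
    · simp [IsHermitian, conjTranspose_eq_transpose_of_trivial, transpose_sub]
    · rw [star_trivial, hquad, sub_nonneg]
      simpa [A, mulVec, dotProduct] using ha x
  obtain ⟨R, hR⟩ := hpsd.exists_dotProduct_mulVec_eq_sum_sq
  suffices h : C σ * ∑ j, X j ^ 2 - ∑ i, (∑ j, C (a i j) * X j) ^ 2 =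
      ∑ k, (∑ j, C (R k j) * X j : MvPolynomial κ ℝ) ^ 2 by
    rw [h]; exact IsSumSq.sum_sq _ _
  refine MvPolynomial.funext fun x => ?_
  simpa [A, mulVec, dotProduct] using (hquad x).symm.trans (hR x)

theorem MvPolynomial.eval_bind₁ {ι κ : Type*} (u : κ → ℝ) (V : ι → MvPolynomial κ ℝ)
    (p : MvPolynomial ι ℝ) : eval u (bind₁ V p) = eval (fun i => eval u (V i)) p :=
  eval₂Hom_bind₁ _ _ _ _

theorem exists_isSumSq_eval_eq_sub_of_sum_sq_le {ι κ : Type*} [Fintype ι] [Fintype κ]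
    (a : ι → κ → ℝ) {σ : ℝ} (hσ : 1 ≤ σ)
    (ha : ∀ u : κ → ℝ, ∑ i, (∑ j, a i j * u j) ^ 2 ≤ σ * ∑ j, u j ^ 2)
    {K e : ℕ} (hKe : K ≤ e) {c : ℝ} (hc : 0 ≤ c) {E : MvPolynomial ι ℝ}
    (hE : IsSumSq (C c * (∑ i, X i ^ 2) ^ K - E)) :
    ∃ S : MvPolynomial κ ℝ, IsSumSq S ∧ ∀ u : κ → ℝ,
      eval u S = c * σ ^ e * (∑ j, u j ^ 2) ^ K - eval (fun i => ∑ j, a i j * u j) E := by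
  set V : ι → MvPolynomial κ ℝ := fun i => ∑ j, C (a i j) * X j
  set N : MvPolynomial κ ℝ := ∑ j, X j ^ 2
  set W : MvPolynomial κ ℝ := ∑ i, V i ^ 2
  have hpow : IsSumSq ((C σ * N) ^ K - W ^ K) := by
    rw [← geom_sum₂_mul]
    refine (IsSumSq.sum fun i _ => ?_).mul (isSumSq_C_mul_sum_sq_sub_sum_sq a σ ha)
    exact (((isSumSq_C (by linarith)).mul (IsSumSq.sum_sq _ _)).pow i).mul
      ((IsSumSq.sum_sq _ _).pow _)
  have hσKe : 0 ≤ c * (σ ^ e - σ ^ K) :=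
    mul_nonneg hc (sub_nonneg.2 (pow_le_pow_right₀ hσ hKe))
  refine ⟨C (c * (σ ^ e - σ ^ K)) * N ^ K + C c * ((C σ * N) ^ K - W ^ K) +
      bind₁ V (C c * (∑ i, X i ^ 2) ^ K - E),
    (((isSumSq_C hσKe).mul ((IsSumSq.sum_sq _ _).pow K)).add ((isSumSq_C hc).mul hpow)).add
      (hE.map _), fun u => ?_⟩
  simp only [map_add, map_mul, map_sub, map_pow, map_sum, eval_C, eval_X, eval_bind₁, N, W, V]
  ring

theorem Nat.multinomial_le_factorial {α : Type*} (s : Finset α) (f : α → ℕ) :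
    Nat.multinomial s f ≤ (∑ i ∈ s, f i).factorial :=
  Nat.le_of_dvd (Nat.factorial_pos _) ⟨_, (Nat.multinomial_spec s f).symm.trans (mul_comm _ _)⟩

section Moments

variable {ι : Type*} [Fintype ι]

noncomputable def moment (μ : Measure (ι → ℝ)) (α : ι → ℕ) : ℝ := ∫ x, ∏ k, x k ^ α k ∂μ

theorem prod_pow_two_smul {R : Type*} [CommMonoid R] (y : ι → R) (β : ι → ℕ) :
    ∏ i, y i ^ (2 • β) i = (∏ i, y i ^ β i) ^ 2 := by
  simp only [Pi.smul_apply, smul_eq_mul, ← prod_pow, ← pow_mul, mul_comm]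

variable [DecidableEq ι]

structure IsNice (μ : Measure (ι → ℝ)) (d : ℕ) (τ : ℝ) : Prop where
  integrable : ∀ α : ι → ℕ, ∑ k, α k = d → Integrable (fun x => ∏ k, x k ^ α k) μ
  moment_single : ∀ i, moment μ (Pi.single i d) = 1
  moment_square : ∀ α : ι → ℕ, ∑ k, α k = d → (∀ k, Even (α k)) → (∀ i, α ≠ Pi.single i d) →
    0 ≤ moment μ α ∧ moment μ α ≤ τ
  moment_nonsquare : ∀ α : ι → ℕ, ∑ k, α k = d → (∃ k, ¬Even (α k)) → moment μ α = 0

theorem sum_piAntidiag_two_mul_eq_of_odd_eq_zero {M : Type*} [AddCommMonoid M] (K : ℕ)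
    (f : (ι → ℕ) → M) (hf : ∀ α ∈ piAntidiag univ (2 * K), (∃ k, ¬Even (α k)) → f α = 0) :
    ∑ α ∈ piAntidiag univ (2 * K), f α = ∑ β ∈ piAntidiag univ K, f (2 • β) := by
  rw [← sum_image fun _ _ _ _ h => smul_right_injective (ι → ℕ) two_ne_zero h]
  refine (sum_subset (fun α hα => ?_) fun α hα hα' => hf α hα ?_).symm
  · obtain ⟨β, hβ, rfl⟩ := mem_image.1 hα
    simp_all [← mul_sum]
  · by_contra! heven
    refine hα' (mem_image.2 ⟨fun k => α k / 2, ?_, funext fun k => ?_⟩)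
    · have hsum : ∑ k, 2 * (α k / 2) = ∑ k, α k :=
        sum_congr rfl fun k _ => Nat.mul_div_cancel' (heven k).two_dvd
      rw [← mul_sum, (mem_piAntidiag.1 hα).1] at hsum
      simp only [mem_piAntidiag, mem_univ, implies_true, and_true]
      omega
    · have := (heven k).two_dvd
      simp only [Pi.smul_apply, smul_eq_mul]
      omega

theorem sum_filter_exists_single {M : Type*} [AddCommMonoid M] {K : ℕ} (hK : K ≠ 0)
    (g : (ι → ℕ) → M) :
    ∑ β ∈ piAntidiag (univ : Finset ι) K with ∃ i, β = Pi.single i K, g β =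
      ∑ i, g (Pi.single i K) := by
  have : {β ∈ piAntidiag (univ : Finset ι) K | ∃ i, β = Pi.single i K} =
      (univ : Finset ι).image (Pi.single · K) := by
    ext β
    simp only [mem_filter, mem_piAntidiag, mem_univ, implies_true, and_true, mem_image,
      true_and]
    constructor
    · rintro ⟨-, i, rfl⟩
      exact ⟨i, rfl⟩
    · rintro ⟨i, rfl⟩
      exact ⟨by simp, i, rfl⟩
  rw [this, sum_image fun i _ j _ h => by simpa [Pi.single_apply, hK] using congrFun h i]

theorem integral_sum_mul_pow {μ : Measure (ι → ℝ)} {d : ℕ}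
    (hint : ∀ α : ι → ℕ, ∑ k, α k = d → Integrable (fun x => ∏ k, x k ^ α k) μ) (y : ι → ℝ) :
    ∫ x, (∑ i, x i * y i) ^ d ∂μ =
      ∑ α ∈ piAntidiag univ d, (Nat.multinomial univ α : ℝ) * moment μ α * ∏ i, y i ^ α i := by
  simp_rw [sum_pow_eq_sum_piAntidiag, mul_pow, prod_mul_distrib]
  rw [integral_finsetSum _ fun α hα =>
    ((hint α (mem_piAntidiag.1 hα).1).mul_const _).const_mul _]
  refine sum_congr rfl fun α _ => ?_
  rw [integral_const_mul, integral_mul_const, moment]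
  ring

noncomputable def momentExcess (μ : Measure (ι → ℝ)) (K : ℕ) : MvPolynomial ι ℝ :=
  ∑ β ∈ piAntidiag univ K with ¬∃ i, β = Pi.single i K,
    C (Nat.multinomial univ (2 • β) * moment μ (2 • β)) * (∏ i, X i ^ β i) ^ 2

theorem eval_momentExcess (μ : Measure (ι → ℝ)) (K : ℕ) (y : ι → ℝ) :
    eval y (momentExcess μ K) = ∑ β ∈ piAntidiag univ K with ¬∃ i, β = Pi.single i K,
      Nat.multinomial univ (2 • β) * moment μ (2 • β) * ∏ i, y i ^ (2 • β) i := by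
  simp only [momentExcess, map_sum, map_mul, eval_C, map_pow, map_prod, eval_X, prod_pow_two_smul]

namespace IsNice

variable {μ : Measure (ι → ℝ)} {K : ℕ} {τ : ℝ}

theorem integral_sum_mul_pow_eq (hμ : IsNice μ (2 * K) τ) (hK : K ≠ 0) (y : ι → ℝ) :
    ∫ x, (∑ i, x i * y i) ^ (2 * K) ∂μ = ∑ i, y i ^ (2 * K) + eval y (momentExcess μ K) := by
  rw [integral_sum_mul_pow hμ.integrable,
    sum_piAntidiag_two_mul_eq_of_odd_eq_zero K _ fun α hα hodd => by
      rw [hμ.moment_nonsquare α (mem_piAntidiag.1 hα).1 hodd, mul_zero, zero_mul],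
    ← sum_filter_add_sum_filter_not _ fun β => ∃ i, β = Pi.single i K,
    sum_filter_exists_single hK, eval_momentExcess]
  congr 1
  refine sum_congr rfl fun i _ => ?_
  have hsingle : 2 • (Pi.single i K : ι → ℕ) = Pi.single i (2 * K) := by
    rw [← smul_eq_mul, Pi.single_smul']
  simp [hsingle, Nat.multinomial_single, hμ.moment_single, Pi.single_apply, pow_ite]

theorem moment_two_smul_mem_Icc (hμ : IsNice μ (2 * K) τ) {β : ι → ℕ}
    (hβ : β ∈ piAntidiag univ K) (hβ' : ¬∃ i, β = Pi.single i K) :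
    moment μ (2 • β) ∈ Set.Icc 0 τ := by
  refine hμ.moment_square _ ?_ (fun k => ⟨β k, by simp [two_mul]⟩) fun i h => hβ' ⟨i, ?_⟩
  · simp [← mul_sum, (mem_piAntidiag.1 hβ).1]
  · refine smul_right_injective (ι → ℕ) two_ne_zero ?_
    simp only [h, ← smul_eq_mul, Pi.single_smul']

theorem isSumSq_momentExcess (hμ : IsNice μ (2 * K) τ) : IsSumSq (momentExcess μ K) := by
  refine IsSumSq.sum fun β hβ => ?_
  rw [mem_filter] at hβ
  have hM := (hμ.moment_two_smul_mem_Icc hβ.1 hβ.2).1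
  exact (isSumSq_C (by positivity)).mul (IsSquare.sq _).isSumSq

theorem isSumSq_sub_momentExcess (hμ : IsNice μ (2 * K) τ) (hτ : 0 ≤ τ) :
    IsSumSq (C (τ * ((2 * K : ℕ) : ℝ) ^ (2 * K)) * (∑ i, X i ^ 2) ^ K - momentExcess μ K) := by
  set c := τ * ((2 * K : ℕ) : ℝ) ^ (2 * K)
  have hexpand : C c * (∑ i, X i ^ 2) ^ K = ∑ β ∈ piAntidiag univ K,
      C (c * Nat.multinomial univ β) * (∏ i, X i ^ β i : MvPolynomial ι ℝ) ^ 2 := by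
    rw [sum_pow_eq_sum_piAntidiag, mul_sum]
    refine sum_congr rfl fun β _ => ?_
    simp only [C_mul, map_natCast, ← prod_pow, ← pow_mul, mul_comm 2, mul_assoc]
  rw [hexpand, ← sum_filter_add_sum_filter_not _ fun β => ∃ i, β = Pi.single i K, momentExcess,
    add_sub_assoc, ← sum_sub_distrib]
  refine (IsSumSq.sum fun β _ => (isSumSq_C (by positivity)).mul (IsSquare.sq _).isSumSq).add
    (IsSumSq.sum fun β hβ => ?_)
  rw [← sub_mul, ← C_sub]
  refine (isSumSq_C (sub_nonneg.2 ?_)).mul (IsSquare.sq _).isSumSq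
  rw [mem_filter] at hβ
  obtain ⟨hM0, hMτ⟩ := hμ.moment_two_smul_mem_Icc hβ.1 hβ.2
  have hmult : (Nat.multinomial univ (2 • β) : ℝ) ≤ ((2 * K : ℕ) : ℝ) ^ (2 * K) := by
    have hsum : ∑ i, (2 • β) i = 2 * K := by simp [← mul_sum, (mem_piAntidiag.1 hβ.1).1]
    have := (Nat.multinomial_le_factorial univ (2 • β)).trans (Nat.factorial_le_pow _)
    rw [hsum] at this
    exact_mod_cast this
  have hone : (1 : ℝ) ≤ Nat.multinomial univ β := by
    exact_mod_cast Nat.multinomial_pos univ β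
  calc (Nat.multinomial univ (2 • β) : ℝ) * moment μ (2 • β)
      ≤ ((2 * K : ℕ) : ℝ) ^ (2 * K) * τ := mul_le_mul hmult hMτ hM0 (by positivity)
    _ = c * 1 := by ring
    _ ≤ c * Nat.multinomial univ β := by gcongr

end IsNice

end Moments

theorem stmt6_general (n m d : ℕ) (hde : Even d) (hd2 : 2 ≤ d)
    (τ : ℝ) (hτ0 : 0 < τ) (σ : ℝ) (hσ : 1 ≤ σ)
    (μ : Measure (Fin m → ℝ))
    (hint : ∀ α : Fin m → ℕ, (∑ k, α k) ≤ d →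
      Integrable (fun x => ∏ k, x k ^ α k) μ)
    (hmom1 : ∀ i, ∫ x, x i ^ d ∂μ = 1)
    (hmom2 : ∀ α : Fin m → ℕ, (∑ k, α k) = d → (∀ k, Even (α k)) →
      (∀ i, α ≠ fun k => if k = i then d else 0) →
      0 ≤ (∫ x, ∏ k, x k ^ α k ∂μ) ∧ (∫ x, ∏ k, x k ^ α k ∂μ) ≤ τ)
    (hmom3 : ∀ α : Fin m → ℕ, (∑ k, α k) = d → (∃ k, ¬ Even (α k)) →
      ∫ x, ∏ k, x k ^ α k ∂μ = 0)
    (a : Fin m → Fin n → ℝ)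
    (hdict : ∀ u : Fin n → ℝ, ∑ i, (∑ j, a i j * u j) ^ 2 ≤ σ * ∑ j, u j ^ 2) :
    ∃ S₁ S₂ : MvPolynomial (Fin n) ℝ, IsSOS S₁ ∧ IsSOS S₂ ∧
      (∀ u : Fin n → ℝ,
        (∫ x, (∑ i, x i * (∑ j, a i j * u j)) ^ d ∂μ) =
            (∑ i, (∑ j, a i j * u j) ^ d) + MvPolynomial.eval u S₁ ∧
        (∑ i, (∑ j, a i j * u j) ^ d) + τ * σ ^ d * (d : ℝ) ^ d * (∑ j, u j ^ 2) ^ (d / 2) =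
            (∫ x, (∑ i, x i * (∑ j, a i j * u j)) ^ d ∂μ) + MvPolynomial.eval u S₂) ∧
      ∀ u : Fin n → ℝ,
        (∑ i, (∑ j, a i j * u j) ^ d) ≤ (∫ x, (∑ i, x i * (∑ j, a i j * u j)) ^ d ∂μ) ∧
        (∫ x, (∑ i, x i * (∑ j, a i j * u j)) ^ d ∂μ) ≤
          (∑ i, (∑ j, a i j * u j) ^ d) + τ * σ ^ d * (d : ℝ) ^ d * (∑ j, u j ^ 2) ^ (d / 2) := by
  obtain ⟨K, rfl⟩ := hde.two_dvd
  have hK : K ≠ 0 := by omega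
  have hμ : IsNice μ (2 * K) τ :=
    { integrable := fun α hα => hint α hα.le
      moment_single := fun i => by simpa [moment, Pi.single_apply, pow_ite] using hmom1 i
      moment_square := fun α hα heven hα' =>
        hmom2 α hα heven fun i h => hα' i (h.trans (funext fun k => (Pi.single_apply i _ k).symm))
      moment_nonsquare := hmom3 }
  obtain ⟨S₂, hS₂, hS₂eval⟩ := exists_isSumSq_eval_eq_sub_of_sum_sq_le a hσ hdict
    (by omega : K ≤ 2 * K) (by positivity) (hμ.isSumSq_sub_momentExcess hτ0.le)
  set S₁ := bind₁ (fun i => ∑ j, C (a i j) * X j) (momentExcess μ K)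
  have hS₁ : IsSumSq S₁ := hμ.isSumSq_momentExcess.map _
  have h₁ : ∀ u : Fin n → ℝ, ∫ x, (∑ i, x i * ∑ j, a i j * u j) ^ (2 * K) ∂μ =
      ∑ i, (∑ j, a i j * u j) ^ (2 * K) + eval u S₁ := fun u => by
    simp [hμ.integral_sum_mul_pow_eq hK, S₁, eval_bind₁]
  have h₂ : ∀ u : Fin n → ℝ, ∑ i, (∑ j, a i j * u j) ^ (2 * K) +
      τ * σ ^ (2 * K) * ((2 * K : ℕ) : ℝ) ^ (2 * K) * (∑ j, u j ^ 2) ^ (2 * K / 2) =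
      ∫ x, (∑ i, x i * ∑ j, a i j * u j) ^ (2 * K) ∂μ + eval u S₂ := fun u => by
    rw [h₁, Nat.mul_div_cancel_left _ two_pos, hS₂eval]
    simp only [S₁, eval_bind₁, map_sum, map_mul, eval_C, eval_X]
    ring
  refine ⟨S₁, S₂, isSOS_iff_isSumSq.2 hS₁, isSOS_iff_isSumSq.2 hS₂, fun u => ⟨h₁ u, h₂ u⟩,
    fun u => ⟨?_, ?_⟩⟩
  · linarith [h₁ u, (hS₁.map (eval u)).nonneg]
  · linarith [h₂ u, (hS₂.map (eval u)).nonneg]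

/-- For a `(d,τ)`-nice probability measure `μ` on `ℝ^m` and a `σ`-dictionary with columns
`a 1, …, a m`, there are sums of squares `S₁, S₂` with
`E_μ ⟨Ax,u⟩^d = ‖Aᵀu‖_d^d + S₁(u)` and `‖Aᵀu‖_d^d + τ σ^d d^d ‖u‖₂^d = E_μ ⟨Ax,u⟩^d + S₂(u)`;
in particular `‖Aᵀu‖_d^d ≤ E_μ ⟨Ax,u⟩^d ≤ ‖Aᵀu‖_d^d + τ σ^d d^d ‖u‖₂^d` for every `u`. -/
theorem stmt6 (n m d : ℕ) (hde : Even d) (hd2 : 2 ≤ d)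
    (τ : ℝ) (hτ0 : 0 < τ) (hτ1 : τ < 1) (σ : ℝ) (hσ : 1 ≤ σ)
    (μ : Measure (Fin m → ℝ)) [IsProbabilityMeasure μ]
    (hint : ∀ α : Fin m → ℕ, (∑ k, α k) ≤ d →
      Integrable (fun x => ∏ k, x k ^ α k) μ)
    (hmom1 : ∀ i, ∫ x, x i ^ d ∂μ = 1)
    (hmom2 : ∀ α : Fin m → ℕ, (∑ k, α k) = d → (∀ k, Even (α k)) →
      (∀ i, α ≠ fun k => if k = i then d else 0) →
      0 ≤ (∫ x, ∏ k, x k ^ α k ∂μ) ∧ (∫ x, ∏ k, x k ^ α k ∂μ) ≤ τ)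
    (hmom3 : ∀ α : Fin m → ℕ, (∑ k, α k) = d → (∃ k, ¬ Even (α k)) →
      ∫ x, ∏ k, x k ^ α k ∂μ = 0)
    (a : Fin m → Fin n → ℝ)
    (hunit : ∀ i, ∑ j, a i j ^ 2 = 1)
    (hdict : ∀ u : Fin n → ℝ, ∑ i, (∑ j, a i j * u j) ^ 2 ≤ σ * ∑ j, u j ^ 2) :
    ∃ S₁ S₂ : MvPolynomial (Fin n) ℝ, IsSOS S₁ ∧ IsSOS S₂ ∧
      (∀ u : Fin n → ℝ,
        (∫ x, (∑ i, x i * (∑ j, a i j * u j)) ^ d ∂μ) =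
            (∑ i, (∑ j, a i j * u j) ^ d) + MvPolynomial.eval u S₁ ∧
        (∑ i, (∑ j, a i j * u j) ^ d) + τ * σ ^ d * (d : ℝ) ^ d * (∑ j, u j ^ 2) ^ (d / 2) =
            (∫ x, (∑ i, x i * (∑ j, a i j * u j)) ^ d ∂μ) + MvPolynomial.eval u S₂) ∧
      ∀ u : Fin n → ℝ,
        (∑ i, (∑ j, a i j * u j) ^ d) ≤ (∫ x, (∑ i, x i * (∑ j, a i j * u j)) ^ d ∂μ) ∧
        (∫ x, (∑ i, x i * (∑ j, a i j * u j)) ^ d ∂μ) ≤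
          (∑ i, (∑ j, a i j * u j) ^ d) + τ * σ ^ d * (d : ℝ) ^ d * (∑ j, u j ^ 2) ^ (d / 2) :=
  stmt6_general n m d hde hd2 τ hτ0 σ hσ μ hint hmom1 hmom2 hmom3 a hdict
end

section
/- Let A be a σ-dictionary with columns a¹,…,a^m ∈ ℝⁿ, let d ≥ 4 be even, let k be a positive integer multiple of d−2, and let δ > 0. Let L be a degree-3k pseudoexpectation on ℝ[u₁,…,u_n] that satisfies the constraints {‖u‖₂² = 1} and {‖Aᵀu‖_d^d ≥ e^{−δd}}. Then there exists a column c ∈ {a¹,…,a^m} such that L(⟨c,u⟩^k) ≥ e^{−δ'k}/m, where δ' = (d/(d−2))·δ + (ln σ)/(d−2). In particular L(⟨c,u⟩^k) ≥ e^{−εk} for ε = (d/(d−2))δ + (ln σ)/(d−2) + (ln m)/k. -/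
open MvPolynomial

/-- A degree-`k` pseudoexpectation on `ℝ[u₁,…,u_n]`: a linear functional with `L 1 = 1`
and `L (P²) ≥ 0` whenever `deg (P²) ≤ k`. -/
def IsPseudoExpectation (n k : ℕ) (L : MvPolynomial (Fin n) ℝ → ℝ) : Prop :=
  (∀ P Q : MvPolynomial (Fin n) ℝ, L (P + Q) = L P + L Q) ∧
  (∀ (c : ℝ) (P : MvPolynomial (Fin n) ℝ), L (c • P) = c * L P) ∧
  L 1 = 1 ∧
  ∀ P : MvPolynomial (Fin n) ℝ, (P ^ 2).totalDegree ≤ k → 0 ≤ L (P ^ 2)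

/-- `L` satisfies the constraint `{P = 0}`: `L (P·Q) = 0` for every `Q` with
`deg (P·Q) ≤ k`. -/
def SatisfiesZero (n k : ℕ) (L : MvPolynomial (Fin n) ℝ → ℝ)
    (P : MvPolynomial (Fin n) ℝ) : Prop :=
  ∀ Q : MvPolynomial (Fin n) ℝ, (P * Q).totalDegree ≤ k → L (P * Q) = 0

/-- `L` satisfies the constraint `{P ≥ 0}`: `L` satisfies `{P - S = 0}` for some
sum-of-squares polynomial `S` (of degree at most `k`). -/
def SatisfiesNonneg (n k : ℕ) (L : MvPolynomial (Fin n) ℝ → ℝ)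
    (P : MvPolynomial (Fin n) ℝ) : Prop :=
  ∃ S : MvPolynomial (Fin n) ℝ, IsSOS S ∧ S.totalDegree ≤ k ∧ SatisfiesZero n k L (P - S)

open scoped Matrix

/-!
Write `xᵢ = ⟨aⁱ, u⟩`, `d = 2p + 2`, `k = 2pt` and `μ s = ∑ᵢ L(xᵢ^{2ps+2})`. Cauchy–Schwarz for `L`
makes `μ` log-convex, so `(μ 1)^t ≤ (μ 0)^{t-1} μ t`. The constraint `‖Aᵀu‖_d^d ≥ e^{-δd}` gives
`μ 1 ≥ e^{-δd}`; since `σ‖u‖² - ‖Aᵀu‖²` is a sum of squares of linear forms (the dictionary bound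
says that `σ Id - AᵀA` is positive semidefinite) and `L ‖u‖² = 1`, also `μ 0 ≤ σ`. For a unit
column, Lagrange's identity writes `‖u‖² xᵢ^k - xᵢ^{k+2}` as a sum of squares, so
`μ t ≤ ∑ᵢ L(xᵢ^k)`. Hence `∑ᵢ L(xᵢ^k) ≥ (e^{-δd}/σ)^t = e^{-δ'k}`, and some summand is at least
the average.
-/

theorem mul_le_mul_succ_of_sq_le_mul {e : ℕ → ℝ} {t : ℕ} (hnn : ∀ s ≤ t + 1, 0 ≤ e s)
    (hlc : ∀ s < t, e (s + 1) ^ 2 ≤ e s * e (s + 2)) :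
    ∀ s ≤ t, e 1 * e s ≤ e 0 * e (s + 1) := by
  intro s hs
  induction s with
  | zero => rw [mul_comm]
  | succ s ih =>
    have ih := ih (by omega)
    have hlc := hlc s (by omega)
    have hs1 := hnn (s + 1) (by omega)
    rcases (hnn s (by omega)).eq_or_lt with hzero | hpos
    · rw [← hzero, zero_mul] at hlc
      have : e (s + 1) = 0 := pow_eq_zero_iff two_ne_zero |>.1 (le_antisymm hlc (sq_nonneg _))
      rw [this, mul_zero]
      exact mul_nonneg (hnn 0 (by omega)) (hnn (s + 2) (by omega))
    · refine le_of_mul_le_mul_left ?_ hpos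
      nlinarith [mul_le_mul_of_nonneg_left ih hs1, hnn 0 (by omega)]

theorem pow_succ_le_pow_mul_of_sq_le_mul {e : ℕ → ℝ} {t : ℕ} (hnn : ∀ s ≤ t + 1, 0 ≤ e s)
    (hlc : ∀ s < t, e (s + 1) ^ 2 ≤ e s * e (s + 2)) :
    ∀ s ≤ t, e 1 ^ (s + 1) ≤ e 0 ^ s * e (s + 1) := by
  intro s hs
  induction s with
  | zero => simp
  | succ s ih =>
    calc e 1 ^ (s + 2) = e 1 * e 1 ^ (s + 1) := by ring
      _ ≤ e 1 * (e 0 ^ s * e (s + 1)) :=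
        mul_le_mul_of_nonneg_left (ih (by omega)) (hnn 1 (by omega))
      _ = e 0 ^ s * (e 1 * e (s + 1)) := by ring
      _ ≤ e 0 ^ s * (e 0 * e (s + 2)) :=
        mul_le_mul_of_nonneg_left (mul_le_mul_succ_of_sq_le_mul hnn hlc (s + 1) hs)
          (pow_nonneg (hnn 0 (by omega)) s)
      _ = e 0 ^ (s + 1) * e (s + 1 + 1) := by ring

theorem Finset.sum_sum_mul_sub_mul_sq {ι R : Type*} [CommRing R] (s : Finset ι) (a b : ι → R) :
    ∑ j ∈ s, ∑ l ∈ s, (a j * b l - a l * b j) ^ 2 =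
      2 * ((∑ j ∈ s, a j ^ 2) * (∑ j ∈ s, b j ^ 2) - (∑ j ∈ s, a j * b j) ^ 2) := by
  have hterm : ∀ j l, (a j * b l - a l * b j) ^ 2 =
      a j ^ 2 * b l ^ 2 + a l ^ 2 * b j ^ 2 - 2 * ((a j * b j) * (a l * b l)) := fun j l => by ring
  have hswap : ∑ j ∈ s, ∑ l ∈ s, a l ^ 2 * b j ^ 2 = ∑ j ∈ s, ∑ l ∈ s, a j ^ 2 * b l ^ 2 :=
    Finset.sum_comm
  simp only [hterm, Finset.sum_sub_distrib, Finset.sum_add_distrib, ← Finset.mul_sum, hswap]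
  rw [Finset.sum_mul, sq, Finset.sum_mul]
  ring

namespace MvPolynomial

section SumOfSquares

variable {τ R : Type*}

theorem homogeneousComponent_sq_of_totalDegree_le [CommSemiring R] {p : MvPolynomial τ R}
    {D : ℕ} (hp : p.totalDegree ≤ D) :
    homogeneousComponent (2 * D) (p ^ 2) = homogeneousComponent D p ^ 2 := by
  classical
  have hp_eq : p = ∑ c ∈ Finset.range (D + 1), homogeneousComponent c p := by
    conv_lhs => rw [← sum_homogeneousComponent p]
    exact Finset.sum_subset (Finset.range_subset_range.2 (by omega)) fun c _ hc =>
      homogeneousComponent_eq_zero c p (by simp at hc; omega)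
  have hterm : ∀ c ∈ Finset.range (D + 1), ∀ c' ∈ Finset.range (D + 1),
      homogeneousComponent (2 * D) (homogeneousComponent c p * homogeneousComponent c' p) =
        if c = D ∧ c' = D then homogeneousComponent D p * homogeneousComponent D p else 0 := by
    intro c hc c' hc'
    rw [Finset.mem_range] at hc hc'
    rw [homogeneousComponent_of_mem ((homogeneousComponent_isHomogeneous c p).mul
      (homogeneousComponent_isHomogeneous c' p))]
    by_cases h : c = D ∧ c' = D
    · obtain ⟨rfl, rfl⟩ := h
      simp [two_mul]
    · rw [if_neg (by omega), if_neg h]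
  conv_lhs => rw [hp_eq]
  rw [sq, Finset.sum_mul_sum, map_sum,
    Finset.sum_congr rfl fun c hc => (map_sum _ _ _).trans (Finset.sum_congr rfl (hterm c hc))]
  simp [sq, ite_and]

theorem homogeneousComponent_totalDegree_ne_zero [CommSemiring R] {p : MvPolynomial τ R}
    (hp : p ≠ 0) : homogeneousComponent p.totalDegree p ≠ 0 := by
  obtain ⟨s, hs, hdeg⟩ := p.support.exists_mem_eq_sup (support_nonempty.2 hp)
    fun s => s.sum fun _ e => e
  intro h
  have := congrArg (coeff s) h
  rw [coeff_homogeneousComponent, if_pos (by rw [totalDegree, hdeg]; rfl), coeff_zero] at this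
  exact mem_support_iff.1 hs this

variable [CommRing R] [LinearOrder R] [IsStrictOrderedRing R]

theorem eq_zero_of_sum_sq_eq_zero {ι : Type*} {s : Finset ι} {q : ι → MvPolynomial τ R}
    (h : ∑ j ∈ s, q j ^ 2 = 0) {i : ι} (hi : i ∈ s) : q i = 0 := by
  refine MvPolynomial.funext fun x => ?_
  have hx : ∑ j ∈ s, eval x (q j) ^ 2 = 0 := by simpa using congrArg (eval x) h
  simpa using (Finset.sum_eq_zero_iff_of_nonneg fun j _ => sq_nonneg _).1 hx i hi

/-- The top-degree parts of the squares cannot cancel in the sum. -/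
theorem totalDegree_sq_le_totalDegree_sum_sq {ι : Type*} {s : Finset ι}
    (q : ι → MvPolynomial τ R) {i : ι} (hi : i ∈ s) :
    (q i ^ 2).totalDegree ≤ (∑ j ∈ s, q j ^ 2).totalDegree := by
  obtain ⟨i₀, hi₀, hmax⟩ := s.exists_max_image (fun j => (q j).totalDegree) ⟨i, hi⟩
  set D := (q i₀).totalDegree
  have hle : (q i ^ 2).totalDegree ≤ 2 * D :=
    (totalDegree_pow _ _).trans (by have := hmax i hi; omega)
  by_contra! hlt
  have hzero : ∑ j ∈ s, homogeneousComponent D (q j) ^ 2 = 0 := by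
    rw [← homogeneousComponent_eq_zero (2 * D) _ (hlt.trans_le hle), map_sum]
    exact Finset.sum_congr rfl fun j hj =>
      (homogeneousComponent_sq_of_totalDegree_le (hmax j hj)).symm
  have hq₀ : q i₀ ≠ 0 := by
    rintro h
    simp only [D, h, totalDegree_zero] at hle
    omega
  exact homogeneousComponent_totalDegree_ne_zero hq₀ (eq_zero_of_sum_sq_eq_zero hzero hi₀)

end SumOfSquares

section LinearForm

variable {ι κ R : Type*} [Fintype ι] [Fintype κ] [CommRing R]

noncomputable def linearForm (w : ι → R) : MvPolynomial ι R := ∑ j, C (w j) * X j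

theorem isHomogeneous_linearForm (w : ι → R) : (linearForm w).IsHomogeneous 1 :=
  IsHomogeneous.sum _ _ _ fun j _ => isHomogeneous_C_mul_X (w j) j

theorem totalDegree_linearForm_pow_le (w : ι → R) (s : ℕ) :
    (linearForm w ^ s).totalDegree ≤ s := by
  simpa using ((isHomogeneous_linearForm w).pow s).totalDegree_le

theorem totalDegree_sum_X_sq_sub_one_le :
    (∑ j, X j ^ 2 - 1 : MvPolynomial ι R).totalDegree ≤ 2 := by
  refine (totalDegree_sub _ _).trans (max_le ?_ (by simp))
  exact (IsHomogeneous.sum _ _ _ fun j _ => isHomogeneous_X_pow j 2).totalDegree_le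

theorem sum_linearForm_sq_eq_dotProduct_mulVec (B : Matrix κ ι R) :
    ∑ i, linearForm (B i) ^ 2 = X ⬝ᵥ ((Bᵀ * B).map C *ᵥ X) := by
  rw [Matrix.map_mul, Matrix.transpose_map, ← Matrix.mulVec_mulVec, Matrix.dotProduct_mulVec,
    Matrix.vecMul_transpose, dotProduct_comm]
  simp only [dotProduct, sq]
  rfl

theorem exists_sum_linearForm_sq_eq_of_dictionary [DecidableEq κ] (σ : ℝ) (a : ι → κ → ℝ)
    (hdict : ∀ u : κ → ℝ, ∑ i, (∑ j, a i j * u j) ^ 2 ≤ σ * ∑ j, u j ^ 2) :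
    ∃ B : κ → κ → ℝ,
      C σ * ∑ j, X j ^ 2 - ∑ i, linearForm (a i) ^ 2 = ∑ j, linearForm (B j) ^ 2 := by
  set A : Matrix ι κ ℝ := Matrix.of a
  have hpsd : (σ • 1 - Aᵀ * A).PosSemidef := by
    refine .of_dotProduct_mulVec_nonneg ?_ fun u => ?_
    · simp [Matrix.IsHermitian, Matrix.conjTranspose_eq_transpose_of_trivial,
        Matrix.transpose_sub, Matrix.transpose_smul]
    · have := hdict u
      simp only [star_trivial, Matrix.sub_mulVec, ← Matrix.mulVec_mulVec, dotProduct_sub,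
        Matrix.dotProduct_mulVec _ Aᵀ, Matrix.vecMul_transpose, Matrix.smul_mulVec,
        Matrix.one_mulVec, dotProduct_smul, smul_eq_mul, sub_nonneg]
      simpa [dotProduct, Matrix.mulVec, A, sq] using this
  obtain ⟨B, hB⟩ : ∃ B : Matrix κ κ ℝ, σ • 1 - Aᵀ * A = Bᴴ * B := by
    open scoped MatrixOrder in exact CStarAlgebra.nonneg_iff_eq_star_mul_self.mp hpsd.nonneg
  refine ⟨B, ?_⟩
  rw [sum_linearForm_sq_eq_dotProduct_mulVec, ← Matrix.conjTranspose_eq_transpose_of_trivial,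
    ← hB, show ∑ i, linearForm (a i) ^ 2 = _ from sum_linearForm_sq_eq_dotProduct_mulVec A]
  have hscalar : (σ • 1 : Matrix κ κ ℝ).map C *ᵥ X = (C σ : MvPolynomial κ ℝ) • X := by
    funext j
    simp [Matrix.mulVec, dotProduct, Matrix.one_apply, apply_ite C, ite_mul]
  simp [Matrix.map_sub, Matrix.sub_mulVec, hscalar, dotProduct, sq, mul_sub, Finset.mul_sum,
    mul_left_comm]

end LinearForm

end MvPolynomial

namespace IsPseudoExpectation

variable {n K : ℕ} {L : MvPolynomial (Fin n) ℝ → ℝ}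

def toLinearMap (hL : IsPseudoExpectation n K L) : MvPolynomial (Fin n) ℝ →ₗ[ℝ] ℝ where
  toFun := L
  map_add' := hL.1
  map_smul' := hL.2.1

theorem map_sum (hL : IsPseudoExpectation n K L) {ι : Type*} (s : Finset ι)
    (f : ι → MvPolynomial (Fin n) ℝ) : L (∑ i ∈ s, f i) = ∑ i ∈ s, L (f i) :=
  _root_.map_sum hL.toLinearMap f s

theorem map_sub (hL : IsPseudoExpectation n K L) (P Q : MvPolynomial (Fin n) ℝ) :
    L (P - Q) = L P - L Q :=
  _root_.map_sub hL.toLinearMap P Q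

theorem map_C_mul (hL : IsPseudoExpectation n K L) (c : ℝ) (P : MvPolynomial (Fin n) ℝ) :
    L (C c * P) = c * L P := by
  rw [← smul_eq_C_mul]
  exact hL.2.1 c P

theorem map_C (hL : IsPseudoExpectation n K L) (c : ℝ) : L (C c) = c := by
  simpa [hL.2.2.1] using hL.map_C_mul c 1

theorem map_sum_sq_nonneg (hL : IsPseudoExpectation n K L) {ι : Type*} (s : Finset ι)
    (P : ι → MvPolynomial (Fin n) ℝ) (hP : ∀ i ∈ s, (P i ^ 2).totalDegree ≤ K) :
    0 ≤ L (∑ i ∈ s, P i ^ 2) := by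
  rw [hL.map_sum]
  exact Finset.sum_nonneg fun i hi => hL.2.2.2 _ (hP i hi)

theorem map_nonneg_of_isSOS (hL : IsPseudoExpectation n K L) {S : MvPolynomial (Fin n) ℝ}
    (hS : IsSOS S) (hdeg : S.totalDegree ≤ K) : 0 ≤ L S := by
  obtain ⟨r, q, rfl⟩ := hS
  exact hL.map_sum_sq_nonneg _ q fun i hi =>
    (totalDegree_sq_le_totalDegree_sum_sq q hi).trans hdeg

theorem sum_map_mul_sq_le (hL : IsPseudoExpectation n K L) {ι : Type*} [Fintype ι]
    (f g : ι → MvPolynomial (Fin n) ℝ) {q : ℕ} (hf : ∀ i, (f i).totalDegree ≤ q)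
    (hg : ∀ i, (g i).totalDegree ≤ q) (hq : 2 * q ≤ K) :
    (∑ i, L (f i * g i)) ^ 2 ≤ (∑ i, L (f i ^ 2)) * ∑ i, L (g i ^ 2) := by
  have hquad : ∀ x : ℝ, 0 ≤ (∑ i, L (f i ^ 2)) * (x * x) + (2 * ∑ i, L (f i * g i)) * x
      + ∑ i, L (g i ^ 2) := by
    intro x
    have hdeg : ∀ i, ((C x * f i + g i) ^ 2).totalDegree ≤ K := fun i =>
      (totalDegree_pow _ _).trans <| by
        have : (C x * f i + g i).totalDegree ≤ q := (totalDegree_add _ _).trans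
          (max_le ((totalDegree_mul _ _).trans (by rw [totalDegree_C, zero_add]; exact hf i))
            (hg i))
        omega
    have hexpand : ∀ i, (C x * f i + g i) ^ 2 =
        C (x * x) * f i ^ 2 + C (2 * x) * (f i * g i) + g i ^ 2 := fun i => by
      simp only [C_mul, map_ofNat]
      ring
    have := hL.map_sum_sq_nonneg Finset.univ _ fun i _ => hdeg i
    simp only [hexpand, hL.map_sum, hL.1, hL.map_C_mul, Finset.sum_add_distrib,
      ← Finset.mul_sum] at this
    linarith
  have := discrim_le_zero hquad
  rw [discrim] at this
  nlinarith

end IsPseudoExpectation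

theorem SatisfiesZero.map_mul_eq {n K : ℕ} {L : MvPolynomial (Fin n) ℝ → ℝ}
    {P Q : MvPolynomial (Fin n) ℝ} (hP : SatisfiesZero n K L (P - 1))
    (hL : IsPseudoExpectation n K L) (hQ : ((P - 1) * Q).totalDegree ≤ K) :
    L (P * Q) = L Q := by
  have := hP Q hQ
  rw [sub_one_mul, hL.map_sub] at this
  linarith

theorem SatisfiesNonneg.map_nonneg {n K : ℕ} {L : MvPolynomial (Fin n) ℝ → ℝ}
    {P : MvPolynomial (Fin n) ℝ} (hP : SatisfiesNonneg n K L P)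
    (hL : IsPseudoExpectation n K L) (hdeg : P.totalDegree ≤ K) : 0 ≤ L P := by
  obtain ⟨S, hS, hSdeg, hPS⟩ := hP
  have := hPS 1 (by rw [mul_one]; exact (totalDegree_sub _ _).trans (max_le hdeg hSdeg))
  rw [mul_one, hL.map_sub] at this
  linarith [hL.map_nonneg_of_isSOS hS hSdeg]

namespace IsPseudoExpectation

variable {n K : ℕ} {L : MvPolynomial (Fin n) ℝ → ℝ} {ι : Type*} [Fintype ι]

theorem map_linearForm_pow_add_two_le (hL : IsPseudoExpectation n K L)
    (hsphere : SatisfiesZero n K L (∑ j, X j ^ 2 - 1)) {w : Fin n → ℝ} (hw : ∑ j, w j ^ 2 = 1)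
    {h : ℕ} (hh : 2 * h + 2 ≤ K) :
    L (linearForm w ^ (2 * h + 2)) ≤ L (linearForm w ^ (2 * h)) := by
  set x := linearForm w
  have hnorm : L ((∑ j, X j ^ 2) * x ^ (2 * h)) = L (x ^ (2 * h)) :=
    hsphere.map_mul_eq hL <| (totalDegree_mul _ _).trans <| by
      linarith [totalDegree_sum_X_sq_sub_one_le (ι := Fin n) (R := ℝ),
        totalDegree_linearForm_pow_le w (2 * h)]
  have hgap : C 2 * ((∑ j, X j ^ 2) * x ^ (2 * h) - x ^ (2 * h + 2)) =
      ∑ j, ∑ l, (x ^ h * (C (w j) * X l - C (w l) * X j)) ^ 2 := by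
    have hunit : ∑ j, C (w j) ^ 2 = (1 : MvPolynomial (Fin n) ℝ) := by
      rw [← map_one C, ← hw, _root_.map_sum C]
      simp only [map_pow]
    have hx : ∑ j, C (w j) * X j = x := rfl
    simp only [mul_pow, ← Finset.mul_sum, Finset.sum_sum_mul_sub_mul_sq, hunit, hx, map_ofNat]
    ring
  have hsos : 0 ≤ L (∑ j, ∑ l, (x ^ h * (C (w j) * X l - C (w l) * X j)) ^ 2) := by
    rw [hL.map_sum]
    refine Finset.sum_nonneg fun j _ => hL.map_sum_sq_nonneg _ _ fun l _ => ?_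
    have := ((((isHomogeneous_linearForm w).pow h).mul
      ((isHomogeneous_C_mul_X (w j) l).sub (isHomogeneous_C_mul_X (w l) j))).pow 2).totalDegree_le
    linarith
  rw [← hgap, hL.map_C_mul, hL.map_sub, hnorm] at hsos
  linarith

theorem sum_map_linearForm_sq_le (hL : IsPseudoExpectation n K L)
    (hsphere : SatisfiesZero n K L (∑ j, X j ^ 2 - 1)) {a : ι → Fin n → ℝ} {σ : ℝ}
    (hdict : ∀ u : Fin n → ℝ, ∑ i, (∑ j, a i j * u j) ^ 2 ≤ σ * ∑ j, u j ^ 2) (hK : 2 ≤ K) :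
    ∑ i, L (linearForm (a i) ^ 2) ≤ σ := by
  obtain ⟨B, hB⟩ := exists_sum_linearForm_sq_eq_of_dictionary σ a hdict
  have hnorm : L (∑ j, X j ^ 2) = 1 := by
    simpa [hL.2.2.1] using hsphere.map_mul_eq hL (Q := 1)
      (by simpa using totalDegree_sum_X_sq_sub_one_le.trans hK)
  have := hL.map_sum_sq_nonneg Finset.univ (fun j => linearForm (B j)) fun j _ =>
    (totalDegree_linearForm_pow_le _ 2).trans hK
  rw [← hB, hL.map_sub, hL.map_C_mul, hnorm, hL.map_sum] at this
  linarith

theorem sum_linearForm_pow_two_mul_nonneg (hL : IsPseudoExpectation n K L) (a : ι → Fin n → ℝ)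
    {r : ℕ} (hr : 2 * r ≤ K) : 0 ≤ ∑ i, L (linearForm (a i) ^ (2 * r)) := by
  refine Finset.sum_nonneg fun i _ => ?_
  have hdeg := (totalDegree_linearForm_pow_le (a i) (2 * r)).trans hr
  rw [pow_mul'] at hdeg ⊢
  exact hL.2.2.2 _ hdeg

theorem sum_linearForm_pow_add_sq_le (hL : IsPseudoExpectation n K L) (a : ι → Fin n → ℝ)
    {r s : ℕ} (hr : 2 * r ≤ K) (hs : 2 * s ≤ K) :
    (∑ i, L (linearForm (a i) ^ (r + s))) ^ 2 ≤
      (∑ i, L (linearForm (a i) ^ (2 * r))) * ∑ i, L (linearForm (a i) ^ (2 * s)) := by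
  have := hL.sum_map_mul_sq_le (fun i => linearForm (a i) ^ r) (fun i => linearForm (a i) ^ s)
    (q := max r s) (fun i => (totalDegree_linearForm_pow_le _ _).trans (le_max_left _ _))
    (fun i => (totalDegree_linearForm_pow_le _ _).trans (le_max_right _ _)) (by omega)
  simpa only [← pow_add, ← pow_mul'] using this

theorem pow_le_pow_mul_sum_linearForm_pow (hL : IsPseudoExpectation n K L)
    (hsphere : SatisfiesZero n K L (∑ j, X j ^ 2 - 1)) {a : ι → Fin n → ℝ}
    (hunit : ∀ i, ∑ j, a i j ^ 2 = 1) {σ : ℝ} (hσ : 1 ≤ σ)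
    (hdict : ∀ u : Fin n → ℝ, ∑ i, (∑ j, a i j * u j) ^ 2 ≤ σ * ∑ j, u j ^ 2)
    {d k t : ℕ} (hd : Even d) (hd2 : 2 ≤ d) (hk : k = (d - 2) * t) (ht : 1 ≤ t)
    (hK : k + d ≤ K) :
    (∑ i, L (linearForm (a i) ^ d)) ^ t ≤ σ ^ t * ∑ i, L (linearForm (a i) ^ k) := by
  obtain ⟨p, rfl⟩ : ∃ p, d = 2 * p + 2 := by
    obtain ⟨c, rfl⟩ := hd
    exact ⟨c - 1, by omega⟩
  obtain rfl : k = 2 * p * t := by rw [hk, Nat.add_sub_cancel]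
  set μ : ℕ → ℝ := fun s => ∑ i, L (linearForm (a i) ^ (2 * (p * s + 1)))
  have hnn : ∀ s ≤ t + 1, 0 ≤ μ s := fun s hs =>
    hL.sum_linearForm_pow_two_mul_nonneg a (by nlinarith)
  have hlc : ∀ s < t, μ (s + 1) ^ 2 ≤ μ s * μ (s + 2) := fun s hs => by
    have := hL.sum_linearForm_pow_add_sq_le a (r := p * s + 1) (s := p * (s + 2) + 1)
      (by nlinarith) (by nlinarith)
    rwa [show p * s + 1 + (p * (s + 2) + 1) = 2 * (p * (s + 1) + 1) by ring] at this
  have hμ0 : μ 0 ≤ σ := by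
    simpa [μ] using hL.sum_map_linearForm_sq_le hsphere hdict (by omega)
  have hμ1 : μ 1 = ∑ i, L (linearForm (a i) ^ (2 * p + 2)) := by simp [μ, mul_add]
  have hμt : μ t ≤ ∑ i, L (linearForm (a i) ^ (2 * p * t)) :=
    Finset.sum_le_sum fun i _ => by
      simpa [μ, mul_add, mul_assoc] using
        hL.map_linearForm_pow_add_two_le hsphere (hunit i) (h := p * t) (by nlinarith)
  obtain ⟨s, rfl⟩ : ∃ s, t = s + 1 := ⟨t - 1, by omega⟩
  rw [← hμ1]
  calc μ 1 ^ (s + 1) ≤ μ 0 ^ s * μ (s + 1) :=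
        pow_succ_le_pow_mul_of_sq_le_mul hnn hlc s (by omega)
    _ ≤ σ ^ s * μ (s + 1) :=
        mul_le_mul_of_nonneg_right (pow_le_pow_left₀ (hnn 0 (by omega)) hμ0 s) (hnn _ (by omega))
    _ ≤ σ ^ (s + 1) * μ (s + 1) :=
        mul_le_mul_of_nonneg_right (pow_le_pow_right₀ hσ (by omega)) (hnn _ (by omega))
    _ ≤ σ ^ (s + 1) * ∑ i, L (linearForm (a i) ^ (2 * p * (s + 1))) :=
        mul_le_mul_of_nonneg_left hμt (by positivity)

end IsPseudoExpectation

theorem exp_neg_mul_eq_div_pow {d k t : ℕ} (hd : 2 < d) (hk : k = (d - 2) * t) (δ : ℝ)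
    {σ : ℝ} (hσ : 0 < σ) :
    Real.exp (-(((d : ℝ) / ((d : ℝ) - 2) * δ + Real.log σ / ((d : ℝ) - 2)) * k)) =
      (Real.exp (-(δ * d)) / σ) ^ t := by
  have hd' : (d : ℝ) - 2 ≠ 0 := by
    have : (2 : ℝ) < d := by exact_mod_cast hd
    linarith
  rw [hk, Nat.cast_mul, Nat.cast_sub hd.le, Nat.cast_ofNat,
    show -(((d : ℝ) / (d - 2) * δ + Real.log σ / (d - 2)) * ((d - 2) * t)) =
      t * (-(δ * d) - Real.log σ) by field_simp; ring,
    Real.exp_nat_mul, Real.exp_sub, Real.exp_log hσ]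

theorem exp_neg_add_log_div_mul_self {x y k : ℝ} (hk : k ≠ 0) (hy : 0 < y) :
    Real.exp (-((x + Real.log y / k) * k)) = Real.exp (-(x * k)) / y := by
  rw [add_mul, div_mul_cancel₀ _ hk, neg_add, Real.exp_add, Real.exp_neg (Real.log y),
    Real.exp_log hy, div_eq_mul_inv]

theorem stmt14_general (n m : ℕ) (hm : 0 < m) (σ : ℝ) (hσ : 1 ≤ σ)
    (a : Fin m → Fin n → ℝ)
    (hunit : ∀ i, ∑ j, a i j ^ 2 = 1)
    (hdict : ∀ u : Fin n → ℝ, ∑ i, (∑ j, a i j * u j) ^ 2 ≤ σ * ∑ j, u j ^ 2)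
    (d : ℕ) (hd4 : 4 ≤ d) (hde : Even d)
    (k : ℕ) (hk : 0 < k) (hdvd : (d - 2) ∣ k)
    (δ : ℝ)
    (L : MvPolynomial (Fin n) ℝ → ℝ)
    (hL : IsPseudoExpectation n (3 * k) L)
    (hc1 : SatisfiesZero n (3 * k) L ((∑ j, X j ^ 2) - 1))
    (hc2 : SatisfiesNonneg n (3 * k) L
      ((∑ i, (∑ j, C (a i j) * X j) ^ d) - C (Real.exp (-(δ * d))))) :
    ∃ i : Fin m,
      Real.exp (-(((d : ℝ) / ((d : ℝ) - 2) * δ + Real.log σ / ((d : ℝ) - 2)) * k)) / m ≤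
        L ((∑ j, C (a i j) * X j) ^ k) ∧
      Real.exp (-(((d : ℝ) / ((d : ℝ) - 2) * δ + Real.log σ / ((d : ℝ) - 2) +
          Real.log m / k) * k)) ≤
        L ((∑ j, C (a i j) * X j) ^ k) := by
  obtain ⟨t, hkt⟩ := hdvd
  have ht : 1 ≤ t := Nat.pos_of_mul_pos_left (hkt ▸ hk)
  have hdk : d - 2 ≤ k := hkt ▸ Nat.le_mul_of_pos_right _ ht
  have hη : Real.exp (-(δ * d)) ≤ ∑ i, L (linearForm (a i) ^ d) := by
    have := hc2.map_nonneg hL <| (totalDegree_sub_C_le _ _).trans <| totalDegree_finsetSum_le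
      fun i _ => (totalDegree_linearForm_pow_le (a i) d).trans (by omega)
    rwa [hL.map_sub, hL.map_C, hL.map_sum, sub_nonneg] at this
  have hsum : (Real.exp (-(δ * d)) / σ) ^ t ≤ ∑ i, L (linearForm (a i) ^ k) := by
    rw [div_pow, div_le_iff₀ (by positivity)]
    exact ((pow_le_pow_left₀ (Real.exp_pos _).le hη t).trans
      (hL.pow_le_pow_mul_sum_linearForm_pow hc1 hunit hσ hdict hde (by omega) hkt ht
        (by omega))).trans_eq (mul_comm _ _)
  have : Nonempty (Fin m) := ⟨⟨0, hm⟩⟩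
  obtain ⟨i, -, hi⟩ : ∃ i ∈ Finset.univ,
      (Real.exp (-(δ * d)) / σ) ^ t / m ≤ L (linearForm (a i) ^ k) := by
    refine Finset.exists_le_of_sum_le Finset.univ_nonempty ?_
    rwa [Finset.sum_const, Finset.card_univ, Fintype.card_fin, nsmul_eq_mul,
      mul_div_cancel₀ _ (by positivity)]
  have hexp := exp_neg_mul_eq_div_pow (by omega) hkt δ (by linarith : 0 < σ)
  refine ⟨i, by rw [hexp]; exact hi, ?_⟩
  rw [exp_neg_add_log_div_mul_self (by exact_mod_cast hk.ne') (by exact_mod_cast hm), hexp]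
  exact hi

/-- Main lemma for tensor decomposition: if `L` is a degree-`3k` pseudoexpectation
satisfying `{‖u‖₂² = 1}` and `{‖Aᵀu‖_d^d ≥ e^{-δd}}` for a `σ`-dictionary `A`, then some
column `c` of `A` has `L ⟨c,u⟩^k ≥ e^{-δ'k}/m ≥ e^{-εk}` with
`δ' = (d/(d-2))δ + (log σ)/(d-2)` and `ε = δ' + (log m)/k`. -/
theorem stmt14 (n m : ℕ) (hm : 0 < m) (σ : ℝ) (hσ : 1 ≤ σ)
    (a : Fin m → Fin n → ℝ)
    (hunit : ∀ i, ∑ j, a i j ^ 2 = 1)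
    (hdict : ∀ u : Fin n → ℝ, ∑ i, (∑ j, a i j * u j) ^ 2 ≤ σ * ∑ j, u j ^ 2)
    (d : ℕ) (hd4 : 4 ≤ d) (hde : Even d)
    (k : ℕ) (hk : 0 < k) (hdvd : (d - 2) ∣ k)
    (δ : ℝ) (hδ : 0 < δ)
    (L : MvPolynomial (Fin n) ℝ → ℝ)
    (hL : IsPseudoExpectation n (3 * k) L)
    (hc1 : SatisfiesZero n (3 * k) L ((∑ j, X j ^ 2) - 1))
    (hc2 : SatisfiesNonneg n (3 * k) L
      ((∑ i, (∑ j, C (a i j) * X j) ^ d) - C (Real.exp (-(δ * d))))) :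
    ∃ i : Fin m,
      Real.exp (-(((d : ℝ) / ((d : ℝ) - 2) * δ + Real.log σ / ((d : ℝ) - 2)) * k)) / m ≤
        L ((∑ j, C (a i j) * X j) ^ k) ∧
      Real.exp (-(((d : ℝ) / ((d : ℝ) - 2) * δ + Real.log σ / ((d : ℝ) - 2) +
          Real.log m / k) * k)) ≤
        L ((∑ j, C (a i j) * X j) ^ k) :=
  stmt14_general n m hm σ hσ a hunit hdict d hd4 hde k hk hdvd δ L hL hc1 hc2
end
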